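/- arXiv:1709.01494 — 2 statements merged into one kernel-verified Lean document; each statement's English description precedes it below -/
import Mathlib

section
/- In a rooted tree ranked with threshold x = 2, any root-to-leaf path contains at most ⌈log₂ n⌉ edges (u,w) with rank(u,2) > rank(w,2), where u is the parent of w. -/
/-!
Ranks never increase from parent to child, so a root-to-leaf path has at most
`rank root - 1` strict decreases. Conversely, by induction over the tree, a node of rank `r`
has at least `2 ^ (r - 1)` descendants: its rank exceeds that of every child only when two
children share the maximal rank, and the subtrees of distinct siblings are disjoint.
Hence `2 ^ k ≤ n` for the number `k` of decreases.
-/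

open Relation Finset

theorem Relation.TransGen.self_of_reflTransGen {α : Type*} {r : α → α → Prop}
    (hr : Relator.RightUnique r) {a b : α} (hab : ReflTransGen r a b)
    (ha : TransGen r a a) : TransGen r b b := by
  induction hab using ReflTransGen.head_induction_on with
  | refl => exact ha
  | head hac _ ih =>
    obtain ⟨c', hac', hc'a⟩ := TransGen.head'_iff.mp ha
    exact ih (TransGen.tail' (hr hac hac' ▸ hc'a) hac)

theorem Finset.card_filter_lt_add_le_of_antitone {f : ℕ → ℕ} {l : ℕ}
    (hf : ∀ i < l, f (i + 1) ≤ f i) : #{i ∈ range l | f (i + 1) < f i} + f l ≤ f 0 := by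
  induction l with
  | zero => simp
  | succ l ih =>
    have hle := hf l l.lt_add_one
    have ih := ih fun i hi => hf i (by omega)
    rw [range_add_one, filter_insert]
    split_ifs
    · rw [card_insert_of_notMem (by simp)]
      omega
    · omega

namespace ParentTree

variable {V : Type*} {parent : V → Option V}

theorem rightUnique_parent_eq (parent : V → Option V) :
    Relator.RightUnique (fun a b => parent a = some b) :=
  fun _ _ _ hb hc => Option.some_injective _ (hb.symm.trans hc)

theorem not_transGen_parent_self {root : V} (hroot : parent root = none)
    (hconn : ∀ v, ReflTransGen (fun a b => parent a = some b) v root) (v : V) :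
    ¬ TransGen (fun a b => parent a = some b) v v := fun hv => by
  obtain ⟨c, hc, -⟩ :=
    TransGen.head'_iff.mp ((hv.self_of_reflTransGen (rightUnique_parent_eq parent)) (hconn v))
  simp [hroot] at hc

theorem wellFounded_parent_eq [Finite V]
    (hacyc : ∀ v, ¬ TransGen (fun a b => parent a = some b) v v) :
    WellFounded (fun a b => parent a = some b) :=
  have : IsTrans V (TransGen fun a b => parent a = some b) := ⟨fun _ _ _ => TransGen.trans⟩
  have : Std.Irrefl (TransGen fun a b => parent a = some b) := ⟨hacyc⟩
  (Finite.wellFounded_of_trans_of_irrefl (TransGen fun a b => parent a = some b)).mono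
    fun _ _ h => .single h

def subtree (parent : V → Option V) (v : V) : Set V :=
  {u | ReflTransGen (fun a b => parent a = some b) u v}

theorem subtree_eq_univ {root : V}
    (hconn : ∀ v, ReflTransGen (fun a b => parent a = some b) v root) :
    subtree parent root = Set.univ :=
  Set.eq_univ_of_forall hconn

theorem mem_subtree_self (v : V) : v ∈ subtree parent v := ReflTransGen.refl

theorem subtree_subset_of_parent_eq {c v : V} (h : parent c = some v) :
    subtree parent c ⊆ subtree parent v :=
  fun _ hu => ReflTransGen.tail hu h

theorem disjoint_subtree_of_parent_eq
    (hacyc : ∀ v, ¬ TransGen (fun a b => parent a = some b) v v) {c₁ c₂ v : V}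
    (h₁ : parent c₁ = some v) (h₂ : parent c₂ = some v) (hne : c₁ ≠ c₂) :
    Disjoint (subtree parent c₁) (subtree parent c₂) := by
  -- a path between two distinct siblings would pass through their parent and close a cycle
  have no_path : ∀ {a b}, parent a = some v → parent b = some v → a ≠ b →
      ¬ ReflTransGen (fun a b => parent a = some b) a b := fun ha hb hab hpath => by
    rcases hpath.cases_head with rfl | ⟨x, hax, hxb⟩
    · exact hab rfl
    · cases ha.symm.trans hax
      exact hacyc _ (TransGen.tail' hxb hb)
  refine Set.disjoint_left.mpr fun u hu₁ hu₂ => ?_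
  rcases ReflTransGen.total_of_right_unique (rightUnique_parent_eq parent) hu₁ hu₂ with h | h
  · exact no_path h₁ h₂ hne h
  · exact no_path h₂ h₁ hne.symm h

theorem two_pow_rank_sub_one_le_ncard_subtree [Finite V]
    (hacyc : ∀ v, ¬ TransGen (fun a b => parent a = some b) v v) {rank : V → ℕ}
    (hrank : ∀ v, rank v ≤ 1 ∨ (∃ c, parent c = some v ∧ rank v ≤ rank c) ∨
      ∃ c₁ c₂, c₁ ≠ c₂ ∧ parent c₁ = some v ∧ parent c₂ = some v ∧
        rank c₁ + 1 = rank v ∧ rank c₂ + 1 = rank v)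
    (v : V) : 2 ^ (rank v - 1) ≤ (subtree parent v).ncard := by
  induction v using (wellFounded_parent_eq hacyc).induction with | _ v ih
  rcases hrank v with hle | ⟨c, hc, hle⟩ | ⟨c₁, c₂, hne, h₁, h₂, hr₁, hr₂⟩
  · rw [Nat.sub_eq_zero_of_le hle, pow_zero, Nat.one_le_iff_ne_zero, Ne, Set.ncard_eq_zero]
    exact Set.nonempty_iff_ne_empty.mp ⟨v, mem_subtree_self v⟩
  · calc 2 ^ (rank v - 1) ≤ 2 ^ (rank c - 1) := Nat.pow_le_pow_right two_pos (by omega)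
      _ ≤ (subtree parent c).ncard := ih c hc
      _ ≤ (subtree parent v).ncard := Set.ncard_le_ncard (subtree_subset_of_parent_eq hc)
  · have hpow : 2 ^ (rank v - 1) ≤ 2 ^ (rank c₁ - 1) + 2 ^ (rank c₂ - 1) := by
      rw [show rank v - 1 = rank c₁ by omega, show rank c₂ = rank c₁ by omega]
      rcases rank c₁ with _ | r
      · simp
      · simp [pow_succ, mul_two]
    calc 2 ^ (rank v - 1) ≤ 2 ^ (rank c₁ - 1) + 2 ^ (rank c₂ - 1) := hpow
      _ ≤ (subtree parent c₁).ncard + (subtree parent c₂).ncard :=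
        add_le_add (ih c₁ h₁) (ih c₂ h₂)
      _ = (subtree parent c₁ ∪ subtree parent c₂).ncard :=
        (Set.ncard_union_eq (disjoint_subtree_of_parent_eq hacyc h₁ h₂ hne)).symm
      _ ≤ (subtree parent v).ncard := Set.ncard_le_ncard
        (Set.union_subset (subtree_subset_of_parent_eq h₁) (subtree_subset_of_parent_eq h₂))

section Recursion

variable [Fintype V] [DecidableEq V]

/-- The ranking procedure with threshold `2` at internal nodes: a node inherits the largest rank
among its children, incremented when at least two children attain it. -/
def SatisfiesRankRecursion (parent : V → Option V) (rank : V → ℕ) : Prop :=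
  ∀ v : V, (∃ w : V, parent w = some v) →
      rank v =
        if 2 ≤ (Finset.univ.filter (fun w : V => parent w = some v ∧
              rank w = (Finset.univ.filter (fun w : V => parent w = some v)).sup rank)).card
        then (Finset.univ.filter (fun w : V => parent w = some v)).sup rank + 1
        else (Finset.univ.filter (fun w : V => parent w = some v)).sup rank

variable {rank : V → ℕ}

theorem rank_le_of_parent_eq (hrec : SatisfiesRankRecursion parent rank) {c v : V}
    (hc : parent c = some v) : rank c ≤ rank v := by
  have hsup : rank c ≤ (univ.filter fun w => parent w = some v).sup rank := le_sup (by simp [hc])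
  rw [hrec v ⟨c, hc⟩]
  split_ifs <;> omega

theorem rank_le_one_or_inherited_or_doubled (hleaf : ∀ v, (∀ w, parent w ≠ some v) → rank v = 1)
    (hrec : SatisfiesRankRecursion parent rank) (v : V) :
    rank v ≤ 1 ∨ (∃ c, parent c = some v ∧ rank v ≤ rank c) ∨
      ∃ c₁ c₂, c₁ ≠ c₂ ∧ parent c₁ = some v ∧ parent c₂ = some v ∧
        rank c₁ + 1 = rank v ∧ rank c₂ + 1 = rank v := by
  by_cases hv : ∃ w, parent w = some v
  · obtain ⟨w, hw⟩ := hv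
    obtain ⟨c, hc, hcM⟩ :=
      exists_mem_eq_sup (univ.filter fun w => parent w = some v) ⟨w, by simp [hw]⟩ rank
    rw [hrec v ⟨w, hw⟩]
    split_ifs with h2
    · obtain ⟨c₁, hc₁, c₂, hc₂, hne⟩ := one_lt_card.mp h2
      simp only [mem_filter, mem_univ, true_and] at hc₁ hc₂
      exact .inr <| .inr ⟨c₁, c₂, hne, hc₁.1, hc₂.1, by rw [hc₁.2], by rw [hc₂.2]⟩
    · exact .inr <| .inl ⟨c, (mem_filter.mp hc).2, hcM.le⟩
  · exact .inl (hleaf v fun w hw => hv ⟨w, hw⟩).le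

end Recursion

end ParentTree

open ParentTree in
theorem rank_decreases_le_clog_two_general {V : Type*} [Fintype V] [DecidableEq V]
    (parent : V → Option V) (root : V)
    (hroot : parent root = none)
    (hconn : ∀ v : V, Relation.ReflTransGen (fun a b => parent a = some b) v root)
    (rank : V → ℕ)
    (hleaf : ∀ v : V, (∀ w : V, parent w ≠ some v) → rank v = 1)
    (hinternal : ∀ v : V, (∃ w : V, parent w = some v) →
      rank v =
        if 2 ≤ (Finset.univ.filter (fun w : V => parent w = some v ∧
              rank w = (Finset.univ.filter (fun w : V => parent w = some v)).sup rank)).card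
        then (Finset.univ.filter (fun w : V => parent w = some v)).sup rank + 1
        else (Finset.univ.filter (fun w : V => parent w = some v)).sup rank)
    -- a root-to-leaf path `p 0 = root, p 1, ..., p l` (each `p (i+1)` a child of `p i`)
    (l : ℕ) (p : ℕ → V)
    (hp0 : p 0 = root)
    (hpath : ∀ i < l, parent (p (i + 1)) = some (p i))
    (hpleaf : ∀ w : V, parent w ≠ some (p l)) :
    ((Finset.range l).filter (fun i => rank (p (i + 1)) < rank (p i))).card
      ≤ Nat.clog 2 (Fintype.card V) := by
  have hcount := card_filter_lt_add_le_of_antitone (f := fun i => rank (p i))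
    fun i hi => rank_le_of_parent_eq hinternal (hpath i hi)
  rw [hp0, hleaf _ hpleaf] at hcount
  have hsize : 2 ^ (rank root - 1) ≤ Fintype.card V := by
    have := two_pow_rank_sub_one_le_ncard_subtree (not_transGen_parent_self hroot hconn)
      (rank_le_one_or_inherited_or_doubled hleaf hinternal) root
    rwa [subtree_eq_univ hconn, Set.ncard_univ, Nat.card_eq_fintype_card] at this
  calc _ = Nat.clog 2 (2 ^ _) := (Nat.clog_pow 2 _ one_lt_two).symm
    _ ≤ Nat.clog 2 (Fintype.card V) :=
      Nat.clog_mono_right 2 ((Nat.pow_le_pow_right two_pos (by omega)).trans hsize)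

/-- In a rooted tree with `n` nodes ranked with threshold `x = 2`,
any root-to-leaf path contains at most `⌈log₂ n⌉` edges `(u, w)` (with `u` the
parent of `w`) such that `rank(u,2) > rank(w,2)`. -/
theorem rank_decreases_le_clog_two {V : Type*} [Fintype V] [DecidableEq V]
    (parent : V → Option V) (root : V)
    (hroot : parent root = none)
    (hconn : ∀ v : V, Relation.ReflTransGen (fun a b => parent a = some b) v root)
    (rank : V → ℕ)
    (hleaf : ∀ v : V, (∀ w : V, parent w ≠ some v) → rank v = 1)
    (hinternal : ∀ v : V, (∃ w : V, parent w = some v) →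
      rank v =
        if 2 ≤ (Finset.univ.filter (fun w : V => parent w = some v ∧
              rank w = (Finset.univ.filter (fun w : V => parent w = some v)).sup rank)).card
        then (Finset.univ.filter (fun w : V => parent w = some v)).sup rank + 1
        else (Finset.univ.filter (fun w : V => parent w = some v)).sup rank)
    (hn : 2 ≤ Fintype.card V)
    -- a root-to-leaf path `p 0 = root, p 1, ..., p l` (each `p (i+1)` a child of `p i`)
    (l : ℕ) (p : ℕ → V)
    (hp0 : p 0 = root)
    (hpath : ∀ i < l, parent (p (i + 1)) = some (p i))
    (hpleaf : ∀ w : V, parent w ≠ some (p l)) :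
    ((Finset.range l).filter (fun i => rank (p (i + 1)) < rank (p i))).card
      ≤ Nat.clog 2 (Fintype.card V) :=
  rank_decreases_le_clog_two_general parent root hroot hconn rank hleaf hinternal l p hp0 hpath
    hpleaf
end

section
/- Path decomposition count: any root-to-leaf path in a SGST decomposes into at most r_max^{[2]} fast segments, at most r_max^{[2]} slow edges, and at most r_max^{[x]} super-slow edges, where r_max^{[2]} ≤ ⌈log₂ n⌉ and r_max^{[x]} ≤ ⌈log_x n⌉; consequently, with x = log n, the number of super-slow edges is O(log n / log log n). -/
/-!
Ranks never increase from a parent to a child, so along a root-to-leaf path a rank drops at most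
`rank(root) - 1` times. Slow edges are drops of `rank(·,2)`, super-slow edges drops of
`rank(·,x)`, and every fast segment but the first starts right after a drop of `rank(·,2)`.
The subtree of an internal node of `t`-rank `r` has more than `t ^ (r - 1)` nodes: either the
rank is inherited from a child of the same rank, or `t` children of rank `r - 1` have disjoint
subtrees of at least `t ^ (r - 2)` nodes each. At the root this gives
`rank(root) ≤ ⌈log_t n⌉`.
-/

open Finset Relation

section RootedForest

variable {V : Type*} {parent : V → Option V}

abbrev childRel (parent : V → Option V) (w v : V) : Prop := parent w = some v

theorem rightUnique_childRel : Relator.RightUnique (childRel parent) :=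
  fun _ _ _ hb hc => Option.some_injective _ (hb.symm.trans hc)

theorem transGen_self_of_reflTransGen {v u : V} (hv : TransGen (childRel parent) v v)
    (hvu : ReflTransGen (childRel parent) v u) : TransGen (childRel parent) u u := by
  induction hvu with
  | refl => exact hv
  | tail _ hbc ih =>
    obtain ⟨d, hbd, hdb⟩ := TransGen.head'_iff.mp ih
    obtain rfl := rightUnique_childRel hbd hbc
    exact TransGen.tail' hdb hbd

theorem not_transGen_self_of_reaches_root {root : V} (hroot : parent root = none)
    (hconn : ∀ v, ReflTransGen (childRel parent) v root) (v : V) :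
    ¬ TransGen (childRel parent) v v := by
  intro hv
  obtain ⟨c, hc, -⟩ := TransGen.head'_iff.mp (transGen_self_of_reflTransGen hv (hconn v))
  simp [childRel, hroot] at hc

theorem wellFounded_childRel [Finite V] (hacyc : ∀ v, ¬ TransGen (childRel parent) v v) :
    WellFounded (childRel parent) :=
  haveI : IsTrans V (TransGen (childRel parent)) := ⟨fun _ _ _ => TransGen.trans⟩
  haveI : Std.Irrefl (TransGen (childRel parent)) := ⟨hacyc⟩
  Subrelation.wf TransGen.single (Finite.wellFounded_of_trans_of_irrefl _)

variable [Fintype V]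

open Classical in
noncomputable def subtree (parent : V → Option V) (v : V) : Finset V :=
  {u | ReflTransGen (childRel parent) u v}

@[simp]
theorem mem_subtree {u v : V} : u ∈ subtree parent v ↔ ReflTransGen (childRel parent) u v := by
  simp [subtree]

theorem self_mem_subtree (v : V) : v ∈ subtree parent v :=
  mem_subtree.mpr ReflTransGen.refl

theorem subtree_subset_of_parent {w v : V} (h : parent w = some v) :
    subtree parent w ⊆ subtree parent v :=
  fun _ hu => mem_subtree.mpr ((mem_subtree.mp hu).tail h)

theorem notMem_subtree_of_parent (hacyc : ∀ v, ¬ TransGen (childRel parent) v v) {w v : V}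
    (h : parent w = some v) : v ∉ subtree parent w :=
  fun hv => hacyc v (TransGen.tail' (mem_subtree.mp hv) h)

theorem disjoint_subtree_of_parent (hacyc : ∀ v, ¬ TransGen (childRel parent) v v)
    {w₁ w₂ v : V} (h₁ : parent w₁ = some v) (h₂ : parent w₂ = some v) (hne : w₁ ≠ w₂) :
    Disjoint (subtree parent w₁) (subtree parent w₂) := by
  /- Two siblings with a common descendant would be ancestor and descendant of one another;
  the path between them then leaves the lower one through their parent `v`. -/
  suffices ∀ {a b}, parent a = some v → parent b = some v → a ≠ b →
      ReflTransGen (childRel parent) a b → False by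
    refine disjoint_left.mpr fun u hu₁ hu₂ => ?_
    rcases (mem_subtree.mp hu₁).total_of_right_unique rightUnique_childRel
      (mem_subtree.mp hu₂) with h | h
    · exact this h₁ h₂ hne h
    · exact this h₂ h₁ hne.symm h
  intro a b ha hb hab h
  obtain ⟨c, hac, hcb⟩ :=
    TransGen.head'_iff.mp ((reflTransGen_iff_eq_or_transGen.mp h).resolve_left hab.symm)
  obtain rfl := rightUnique_childRel ha hac
  exact hacyc _ (TransGen.tail' hcb hb)

variable [DecidableEq V]

def children (parent : V → Option V) (v : V) : Finset V :=
  {w | parent w = some v}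

theorem one_add_sum_card_subtree_children_le (hacyc : ∀ v, ¬ TransGen (childRel parent) v v)
    (v : V) : 1 + ∑ w ∈ children parent v, #(subtree parent w) ≤ #(subtree parent v) := by
  have hchild : ∀ w ∈ children parent v, parent w = some v := fun w hw => (mem_filter.mp hw).2
  have hdisj : (children parent v : Set V).PairwiseDisjoint (subtree parent) :=
    fun w₁ h₁ w₂ h₂ => disjoint_subtree_of_parent hacyc (hchild w₁ h₁) (hchild w₂ h₂)
  have hv : v ∉ (children parent v).biUnion (subtree parent) := by
    simp only [mem_biUnion, not_exists, not_and]
    exact fun w hw => notMem_subtree_of_parent hacyc (hchild w hw)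
  have hsub : insert v ((children parent v).biUnion (subtree parent)) ⊆ subtree parent v := by
    refine insert_subset (self_mem_subtree v) (biUnion_subset.mpr fun w hw => ?_)
    exact subtree_subset_of_parent (hchild w hw)
  calc 1 + ∑ w ∈ children parent v, #(subtree parent w)
      = #(insert v ((children parent v).biUnion (subtree parent))) := by
        rw [card_insert_of_notMem hv, card_biUnion hdisj, add_comm]
    _ ≤ #(subtree parent v) := card_le_card hsub

end RootedForest

structure IsRank {V : Type*} [Fintype V] [DecidableEq V] (parent : V → Option V) (t : ℕ)
    (rank : V → ℕ) : Prop where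
  leaf : ∀ v, (∀ w, parent w ≠ some v) → rank v = 1
  internal : ∀ v, (∃ w, parent w = some v) → rank v =
    if t ≤ #{w | parent w = some v ∧ rank w = (children parent v).sup rank}
    then (children parent v).sup rank + 1
    else (children parent v).sup rank

namespace IsRank

variable {V : Type*} [Fintype V] [DecidableEq V] {parent : V → Option V} {t : ℕ}
  {rank : V → ℕ}

theorem le_of_parent (hr : IsRank parent t rank) {w v : V} (h : parent w = some v) :
    rank w ≤ rank v := by
  have : rank w ≤ (children parent v).sup rank := le_sup (mem_filter.mpr ⟨mem_univ w, h⟩)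
  rw [hr.internal v ⟨w, h⟩]
  split_ifs <;> omega

theorem pow_lt_card_subtree (hr : IsRank parent t rank) (ht : 1 ≤ t)
    (hacyc : ∀ v, ¬ TransGen (childRel parent) v v) {v : V} (hv : ∃ w, parent w = some v)
    (hbound : ∀ w, parent w = some v → t ^ (rank w - 1) ≤ #(subtree parent w)) :
    t ^ (rank v - 1) < #(subtree parent v) := by
  have hchild : ∀ w ∈ children parent v, parent w = some v := fun w hw => (mem_filter.mp hw).2
  obtain ⟨w₀, hw₀, hsup⟩ := exists_mem_eq_sup (children parent v)
    (hv.imp fun w hw => mem_filter.mpr ⟨mem_univ w, hw⟩) rank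
  have hsize := one_add_sum_card_subtree_children_le hacyc v
  rw [hr.internal v hv]
  set s := (children parent v).sup rank
  split_ifs with hmany
  · set T : Finset V := {w | parent w = some v ∧ rank w = s}
    have hT : T ⊆ children parent v :=
      fun w hw => mem_filter.mpr ⟨mem_univ w, (mem_filter.mp hw).2.1⟩
    have hpow : t ^ s ≤ t * t ^ (s - 1) := by
      rcases s.eq_zero_or_pos with h | h
      · simpa [h] using ht
      · rw [← pow_succ', Nat.sub_add_cancel h]
    calc t ^ (s + 1 - 1) ≤ t * t ^ (s - 1) := by simpa using hpow
      _ ≤ #T * t ^ (s - 1) := Nat.mul_le_mul_right _ hmany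
      _ ≤ ∑ w ∈ T, #(subtree parent w) := by
        rw [← smul_eq_mul]
        exact card_nsmul_le_sum T _ _ fun w hw => by
          obtain ⟨-, hwv, hws⟩ := mem_filter.mp hw
          simpa [hws] using hbound w hwv
      _ ≤ ∑ w ∈ children parent v, #(subtree parent w) := sum_le_sum_of_subset hT
      _ < #(subtree parent v) := by omega
  · calc t ^ (s - 1) = t ^ (rank w₀ - 1) := by rw [hsup]
      _ ≤ #(subtree parent w₀) := hbound w₀ (hchild w₀ hw₀)
      _ ≤ ∑ w ∈ children parent v, #(subtree parent w) :=
        single_le_sum (f := fun w => #(subtree parent w)) (fun _ _ => Nat.zero_le _) hw₀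
      _ < #(subtree parent v) := by omega

theorem pow_le_card_subtree (hr : IsRank parent t rank) (ht : 1 ≤ t)
    (hacyc : ∀ v, ¬ TransGen (childRel parent) v v) (v : V) :
    t ^ (rank v - 1) ≤ #(subtree parent v) := by
  induction v using (wellFounded_childRel hacyc).induction with
  | _ v ih =>
    by_cases hv : ∃ w, parent w = some v
    · exact (hr.pow_lt_card_subtree ht hacyc hv ih).le
    · rw [hr.leaf v fun w hw => hv ⟨w, hw⟩]
      exact card_pos.mpr ⟨v, self_mem_subtree v⟩

theorem le_clog (hr : IsRank parent t rank) (ht : 2 ≤ t) {root : V} (hroot : parent root = none)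
    (hconn : ∀ v, ReflTransGen (childRel parent) v root) (hn : 2 ≤ Fintype.card V) :
    rank root ≤ Nat.clog t (Fintype.card V) := by
  have hacyc := not_transGen_self_of_reaches_root hroot hconn
  have hchild : ∃ w, parent w = some root := by
    obtain ⟨v, hv⟩ := Fintype.exists_ne_of_one_lt_card hn root
    obtain ⟨c, -, hc⟩ := TransGen.tail'_iff.mp
      ((reflTransGen_iff_eq_or_transGen.mp (hconn v)).resolve_left hv.symm)
    exact ⟨c, hc⟩
  have hlt : t ^ (rank root - 1) < Fintype.card V :=
    (hr.pow_lt_card_subtree (by omega) hacyc hchild fun w _ =>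
      hr.pow_le_card_subtree (by omega) hacyc w).trans_le (card_le_univ _)
  have := (Nat.lt_clog_iff_pow_lt (by omega)).mpr hlt
  omega

end IsRank

section Descents

variable (f : ℕ → ℕ) {l : ℕ}

theorem card_descents_add_le (hf : ∀ i < l, f (i + 1) ≤ f i) :
    #{i ∈ range l | f (i + 1) < f i} + f l ≤ f 0 := by
  induction l with
  | zero => simp
  | succ l ih =>
    have ih := ih fun i hi => hf i (by omega)
    have hl := hf l (by omega)
    rw [range_add_one, filter_insert]
    split_ifs with hd
    · rw [card_insert_of_notMem (by simp)]
      omega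
    · omega

/-- Every run of equal values along a nonincreasing sequence, except one starting at `0`,
begins right after a descent. -/
theorem card_runStarts_le_card_descents_add_one (hf : ∀ i < l, f (i + 1) ≤ f i) :
    #{i ∈ range l | f (i + 1) = f i ∧ (i = 0 ∨ ¬ f i = f (i - 1))}
      ≤ #{i ∈ range l | f (i + 1) < f i} + 1 := by
  calc _ ≤ #(insert 0 ({i ∈ range l | f (i + 1) < f i}.image (· + 1))) := by
        refine card_le_card fun i hi => ?_
        rcases i with _ | j
        · exact mem_insert_self _ _
        · simp only [mem_filter, mem_range, Nat.add_sub_cancel] at hi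
          have := hf j (by omega)
          refine mem_insert_of_mem (mem_image.mpr ⟨j, mem_filter.mpr ⟨mem_range.mpr ?_, ?_⟩, rfl⟩)
          all_goals omega
    _ ≤ _ := (card_insert_le _ _).trans (Nat.add_le_add_right card_image_le 1)

end Descents

/-- Path decomposition count in a SGST: consider a rooted spanning tree
on `n` nodes ranked both with threshold `2` (giving `rank2`) and with threshold `x`
(giving `rankx`). Along any root-to-leaf path:
* the number of (maximal) fast segments — runs of edges with `rank2(parent) = rank2(child)` —
  is at most `⌈log₂ n⌉`;
* the number of slow edges (`rank2(parent) > rank2(child)` but `rankx(parent) = rankx(child)`)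
  is at most `⌈log₂ n⌉`;
* the number of super-slow edges (`rankx(parent) > rankx(child)`) is at most `⌈log_x n⌉`. -/
theorem sgst_path_decomposition {V : Type*} [Fintype V] [DecidableEq V]
    (parent : V → Option V) (root : V)
    (hroot : parent root = none)
    (hconn : ∀ v : V, Relation.ReflTransGen (fun a b => parent a = some b) v root)
    (x : ℕ) (hx : 2 ≤ x)
    (rank2 rankx : V → ℕ)
    (hleaf2 : ∀ v : V, (∀ w : V, parent w ≠ some v) → rank2 v = 1)
    (hinternal2 : ∀ v : V, (∃ w : V, parent w = some v) →
      rank2 v =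
        if 2 ≤ (Finset.univ.filter (fun w : V => parent w = some v ∧
              rank2 w = (Finset.univ.filter (fun w : V => parent w = some v)).sup rank2)).card
        then (Finset.univ.filter (fun w : V => parent w = some v)).sup rank2 + 1
        else (Finset.univ.filter (fun w : V => parent w = some v)).sup rank2)
    (hleafx : ∀ v : V, (∀ w : V, parent w ≠ some v) → rankx v = 1)
    (hinternalx : ∀ v : V, (∃ w : V, parent w = some v) →
      rankx v =
        if x ≤ (Finset.univ.filter (fun w : V => parent w = some v ∧
              rankx w = (Finset.univ.filter (fun w : V => parent w = some v)).sup rankx)).card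
        then (Finset.univ.filter (fun w : V => parent w = some v)).sup rankx + 1
        else (Finset.univ.filter (fun w : V => parent w = some v)).sup rankx)
    (hn : 2 ≤ Fintype.card V)
    -- a root-to-leaf path `p 0 = root, p 1, ..., p l`
    (l : ℕ) (p : ℕ → V)
    (hp0 : p 0 = root)
    (hpath : ∀ i < l, parent (p (i + 1)) = some (p i))
    (hpleaf : ∀ w : V, parent w ≠ some (p l)) :
    -- number of maximal fast segments (a fast edge starting a run)
    ((Finset.range l).filter (fun i => rank2 (p (i + 1)) = rank2 (p i) ∧
        (i = 0 ∨ ¬ rank2 (p i) = rank2 (p (i - 1))))).card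
      ≤ Nat.clog 2 (Fintype.card V) ∧
    -- number of slow edges
    ((Finset.range l).filter (fun i => rank2 (p (i + 1)) < rank2 (p i) ∧
        rankx (p (i + 1)) = rankx (p i))).card
      ≤ Nat.clog 2 (Fintype.card V) ∧
    -- number of super-slow edges
    ((Finset.range l).filter (fun i => rankx (p (i + 1)) < rankx (p i))).card
      ≤ Nat.clog x (Fintype.card V) := by
  have h2 : IsRank parent 2 rank2 := ⟨hleaf2, hinternal2⟩
  have hX : IsRank parent x rankx := ⟨hleafx, hinternalx⟩
  have hmono2 : ∀ i < l, rank2 (p (i + 1)) ≤ rank2 (p i) :=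
    fun i hi => h2.le_of_parent (hpath i hi)
  have hmonox : ∀ i < l, rankx (p (i + 1)) ≤ rankx (p i) :=
    fun i hi => hX.le_of_parent (hpath i hi)
  have hdesc2 := card_descents_add_le (fun i => rank2 (p i)) hmono2
  have hdescx := card_descents_add_le (fun i => rankx (p i)) hmonox
  have hslow : #{i ∈ range l | rank2 (p (i + 1)) < rank2 (p i) ∧ rankx (p (i + 1)) = rankx (p i)}
      ≤ #{i ∈ range l | rank2 (p (i + 1)) < rank2 (p i)} :=
    card_le_card (monotone_filter_right _ fun _ _ h => h.1)
  have hroot2 := h2.le_clog le_rfl hroot hconn hn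
  have hrootx := hX.le_clog hx hroot hconn hn
  have hleaf := hleaf2 (p l) hpleaf
  rw [hp0] at hdesc2 hdescx
  exact ⟨(card_runStarts_le_card_descents_add_one (fun i => rank2 (p i)) hmono2).trans
    (by omega), by omega, by omega⟩
end
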